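/- arXiv:1604.02104 — 5 statements merged into one kernel-verified Lean document; each statement's English description precedes it below -/
import Mathlib

section
/- For a rational number a with a ≠ ±1 and a ≠ 0, the point (4a, 4a(a^2-1)) on the elliptic curve E_a : v^2 = u^3 + (a^4-4a^3-2a^2-4a+1)u^2 + 16a^4 u is a point of order exactly 8. -/
/-- The Weierstrass curve `E_a : v² = u³ + (a⁴-4a³-2a²-4a+1)u² + 16a⁴u` over `ℚ`. -/
def Ecurve (a : ℚ) : WeierstrassCurve.Affine ℚ :=
  { a₁ := 0, a₂ := a ^ 4 - 4 * a ^ 3 - 2 * a ^ 2 - 4 * a + 1, a₃ := 0,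
    a₄ := 16 * a ^ 4, a₆ := 0 }

/-!
Doubling with the tangent-line formulae gives `2P = (4a², -4a²(a-1)²)` and `4P = (0, 0)`, which
is `2`-torsion; so `8P = 0` while `4P ≠ 0`, and the order of `P` is `8`.
-/

open WeierstrassCurve.Affine WeierstrassCurve.Affine.Point

namespace WeierstrassCurve.Affine.Point

variable {F : Type*} [Field F] [DecidableEq F] {W : WeierstrassCurve.Affine F}

lemma two_nsmul_some_of_tangent {x y x' y' ℓ : F} {h : W.Nonsingular x y}
    (h' : W.Nonsingular x' y') (hy : y ≠ W.negY x y)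
    (hℓ : 3 * x ^ 2 + 2 * W.a₂ * x + W.a₄ - W.a₁ * y = ℓ * (y - W.negY x y))
    (hx' : W.addX x x ℓ = x') (hy' : W.addY x x y ℓ = y') :
    2 • some x y h = some x' y' h' := by
  have hslope : W.slope x x y y = ℓ := by
    rw [slope_of_Y_ne rfl hy, div_eq_iff (sub_ne_zero.mpr hy), hℓ]
  subst hslope hx' hy'
  rw [two_nsmul]
  exact add_self_of_Y_ne hy

end WeierstrassCurve.Affine.Point

namespace Ecurve

variable {a : ℚ}

lemma ne_negY_iff {x y : ℚ} : y ≠ (Ecurve a).negY x y ↔ y ≠ 0 := by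
  simp only [negY, Ecurve]
  constructor <;> intro hy hc <;> apply hy <;> linarith

lemma nonsingular_zero_zero (ha0 : a ≠ 0) : (Ecurve a).Nonsingular 0 0 := by
  rw [nonsingular_zero]
  exact ⟨rfl, Or.inr (by simp only [Ecurve]; positivity)⟩

lemma double_Y_ne_zero (ha0 : a ≠ 0) (ha1 : a ≠ 1) : -(4 * a ^ 2 * (a - 1) ^ 2) ≠ 0 := by
  have : a - 1 ≠ 0 := sub_ne_zero.mpr ha1
  simp [ha0, this]

lemma nonsingular_double (ha0 : a ≠ 0) (ha1 : a ≠ 1) :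
    (Ecurve a).Nonsingular (4 * a ^ 2) (-(4 * a ^ 2 * (a - 1) ^ 2)) := by
  refine (nonsingular_iff _ _).mpr ⟨?_, Or.inr (ne_negY_iff.mpr (double_Y_ne_zero ha0 ha1))⟩
  rw [equation_iff]
  simp only [Ecurve]
  ring

lemma point_Y_ne_zero (ha0 : a ≠ 0) (ha1 : a ≠ 1) (ha1' : a ≠ -1) :
    4 * a * (a ^ 2 - 1) ≠ 0 := by
  have h1 : a - 1 ≠ 0 := sub_ne_zero.mpr ha1
  have h2 : a + 1 ≠ 0 := by rwa [← sub_neg_eq_add, sub_ne_zero]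
  rw [show a ^ 2 - 1 = (a - 1) * (a + 1) by ring]
  simp [ha0, h1, h2]

lemma two_nsmul_point (ha0 : a ≠ 0) (ha1 : a ≠ 1) (ha1' : a ≠ -1)
    (h : (Ecurve a).Nonsingular (4 * a) (4 * a * (a ^ 2 - 1))) :
    2 • some _ _ h = some _ _ (nonsingular_double ha0 ha1) := by
  refine two_nsmul_some_of_tangent _ (ne_negY_iff.mpr (point_Y_ne_zero ha0 ha1 ha1'))
    (ℓ := a ^ 2 - 2 * a - 1) ?_ ?_ ?_ <;>
    simp only [Ecurve, addY, addX, negAddY, negY] <;> ring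

lemma two_nsmul_double (ha0 : a ≠ 0) (ha1 : a ≠ 1) :
    2 • some _ _ (nonsingular_double ha0 ha1) = some _ _ (nonsingular_zero_zero ha0) := by
  refine two_nsmul_some_of_tangent _ (ne_negY_iff.mpr (double_Y_ne_zero ha0 ha1))
    (ℓ := -(a - 1) ^ 2) ?_ ?_ ?_ <;>
    simp only [Ecurve, addY, addX, negAddY, negY] <;> ring

end Ecurve

theorem stmt_6 (a : ℚ) (ha0 : a ≠ 0) (ha1 : a ≠ 1) (ha1' : a ≠ -1)
    (h : (Ecurve a).Nonsingular (4 * a) (4 * a * (a ^ 2 - 1))) :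
    addOrderOf (WeierstrassCurve.Affine.Point.some _ _ h) = 8 := by
  have h4 : 4 • some _ _ h = some _ _ (Ecurve.nonsingular_zero_zero ha0) := by
    rw [show 4 = 2 * 2 from rfl, mul_nsmul', Ecurve.two_nsmul_point ha0 ha1 ha1',
      Ecurve.two_nsmul_double ha0 ha1]
  have h8 : 8 • some _ _ h = 0 := by
    rw [show 8 = 2 * 4 from rfl, mul_nsmul', h4, two_nsmul]
    exact add_self_of_Y_eq (by simp [Ecurve])
  exact addOrderOf_eq_prime_pow (p := 2) (n := 2) (h4 ▸ some_ne_zero _) h8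
end

section
/- The elliptic curve E_a(Q) has three rational points of order 2 if and only if a^2 - 6a + 1 is the square of a rational number, and the rational solutions of a^2 - 6a + 1 = b^2 with a ≠ 0 are parametrized by a = 2(k+3)/(1-k^2) for rational k ≠ ±1 (via the line b = 1 + ka through (0,1)). -/
namespace WeierstrassCurve.Affine

lemma nonsingular_Y_zero_iff {R : Type*} [CommRing R] {W : WeierstrassCurve.Affine R}
    (ha₁ : W.a₁ = 0) (ha₃ : W.a₃ = 0) (x : R) :
    W.Nonsingular x 0 ↔
      x ^ 3 + W.a₂ * x ^ 2 + W.a₄ * x + W.a₆ = 0 ∧ 3 * x ^ 2 + 2 * W.a₂ * x + W.a₄ ≠ 0 := by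
  rw [nonsingular_iff, equation_iff, ha₁, ha₃]
  constructor
  · rintro ⟨heq, hX | hY⟩
    · exact ⟨by linear_combination -heq, by simpa [eq_comm] using hX⟩
    · simp at hY
  · rintro ⟨heq, hX⟩
    exact ⟨by linear_combination -heq, .inl (by simpa [eq_comm] using hX)⟩

namespace Point

variable {F : Type*} [Field F] [DecidableEq F] {W : WeierstrassCurve.Affine F}

lemma addOrderOf_some_eq_two_iff {x y : F} (h : W.Nonsingular x y) :
    addOrderOf (some x y h) = 2 ↔ y = W.negY x y := by
  have : Fact (Nat.Prime 2) := ⟨Nat.prime_two⟩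
  rw [addOrderOf_eq_prime_iff, two_nsmul, add_eq_zero_iff_eq_neg, neg_some, some.injEq]
  simp [some_ne_zero]

lemma addOrderOf_eq_two_iff [NeZero (2 : F)] (ha₁ : W.a₁ = 0) (ha₃ : W.a₃ = 0) (P : W.Point) :
    addOrderOf P = 2 ↔ ∃ x h, P = some x 0 h := by
  constructor
  · rcases P with _ | @⟨x, y, h⟩
    · simp [← zero_def]
    · rw [addOrderOf_some_eq_two_iff, negY, ha₁, ha₃]
      intro hy
      obtain rfl : y = 0 := by
        rwa [zero_mul, sub_zero, sub_zero, eq_neg_iff_add_eq_zero, ← two_mul,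
          mul_eq_zero_iff_left two_ne_zero] at hy
      exact ⟨x, h, rfl⟩
  · rintro ⟨x, h, rfl⟩
    rw [addOrderOf_some_eq_two_iff, negY, ha₁, ha₃]
    ring

lemma exists_card_three_addOrderOf_eq_two (ha₁ : W.a₁ = 0) (ha₃ : W.a₃ = 0)
    {e₁ e₂ e₃ : F} (h₁₂ : e₁ ≠ e₂) (h₁₃ : e₁ ≠ e₃) (h₂₃ : e₂ ≠ e₃)
    (ha₂ : W.a₂ = -(e₁ + e₂ + e₃)) (ha₄ : W.a₄ = e₁ * e₂ + e₁ * e₃ + e₂ * e₃)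
    (ha₆ : W.a₆ = -(e₁ * e₂ * e₃)) :
    ∃ S : Finset W.Point, S.card = 3 ∧ ∀ P ∈ S, addOrderOf P = 2 := by
  have nonsingular {e e' e'' : F} (he' : e ≠ e') (he'' : e ≠ e'')
      (hsum : e + e' + e'' = e₁ + e₂ + e₃)
      (hmul : e * e' + e * e'' + e' * e'' = e₁ * e₂ + e₁ * e₃ + e₂ * e₃)
      (hprod : e * e' * e'' = e₁ * e₂ * e₃) : W.Nonsingular e 0 := by
    rw [nonsingular_Y_zero_iff ha₁ ha₃, ha₂, ha₄, ha₆]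
    refine ⟨by linear_combination e ^ 2 * hsum - e * hmul + hprod, ?_⟩
    -- the derivative of `(x - e) (x - e') (x - e'')` at its simple root `e`
    have hder : 3 * e ^ 2 + 2 * -(e₁ + e₂ + e₃) * e + (e₁ * e₂ + e₁ * e₃ + e₂ * e₃) =
        (e - e') * (e - e'') := by
      linear_combination 2 * e * hsum - hmul
    rw [hder]
    exact mul_ne_zero (sub_ne_zero.2 he') (sub_ne_zero.2 he'')
  have h₁ := nonsingular h₁₂ h₁₃ rfl rfl rfl
  have h₂ := nonsingular h₁₂.symm h₂₃ (by ring) (by ring) (by ring)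
  have h₃ := nonsingular h₁₃.symm h₂₃.symm (by ring) (by ring) (by ring)
  refine ⟨{some e₁ 0 h₁, some e₂ 0 h₂, some e₃ 0 h₃}, ?_, ?_⟩
  · rw [Finset.card_eq_three]
    exact ⟨_, _, _, by simpa using h₁₂, by simpa using h₁₃, by simpa using h₂₃, rfl⟩
  · simp only [Finset.mem_insert, Finset.mem_singleton]
    rintro P (rfl | rfl | rfl) <;>
      exact (addOrderOf_some_eq_two_iff _).2 (by rw [negY, ha₁, ha₃]; ring)

lemma exists_discrim_eq_sq_of_one_lt_card [NeZero (2 : F)] (ha₁ : W.a₁ = 0) (ha₃ : W.a₃ = 0)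
    (ha₆ : W.a₆ = 0) {S : Finset W.Point} (hS : 1 < S.card)
    (hS₂ : ∀ P ∈ S, addOrderOf P = 2) : ∃ d, discrim 1 W.a₂ W.a₄ = d ^ 2 := by
  obtain ⟨P, hP, Q, hQ, hPQ⟩ := Finset.one_lt_card.1 hS
  obtain ⟨x, hx, rfl⟩ := (addOrderOf_eq_two_iff ha₁ ha₃ P).1 (hS₂ P hP)
  obtain ⟨x', hx', rfl⟩ := (addOrderOf_eq_two_iff ha₁ ha₃ Q).1 (hS₂ Q hQ)
  obtain ⟨u, hu, hu₀⟩ : ∃ u, W.Nonsingular u 0 ∧ u ≠ 0 := by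
    by_cases hx₀ : x = 0
    · refine ⟨x', hx', fun hx'₀ => hPQ ?_⟩
      simp [hx₀, hx'₀]
    · exact ⟨x, hx, hx₀⟩
  have hcubic := ((nonsingular_Y_zero_iff ha₁ ha₃ u).1 hu).1
  rw [ha₆] at hcubic
  have hquad : 1 * (u * u) + W.a₂ * u + W.a₄ = 0 := by
    refine (mul_eq_zero_iff_left hu₀).1 ?_
    linear_combination hcubic
  exact ⟨_, discrim_eq_sq_of_quadratic_eq_zero hquad⟩

lemma exists_card_three_addOrderOf_eq_two_of_discrim_eq_sq [NeZero (2 : F)] (ha₁ : W.a₁ = 0)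
    (ha₃ : W.a₃ = 0) (ha₆ : W.a₆ = 0) (ha₄ : W.a₄ ≠ 0) {d : F} (hd : d ≠ 0)
    (hdisc : discrim 1 W.a₂ W.a₄ = d ^ 2) :
    ∃ S : Finset W.Point, S.card = 3 ∧ ∀ P ∈ S, addOrderOf P = 2 := by
  rw [discrim] at hdisc
  set r := (-W.a₂ + d) / 2
  set s := (-W.a₂ - d) / 2
  have hrs : r * s = W.a₄ := by
    simp only [r, s]
    field_simp
    linear_combination hdisc
  have hsub : r - s = d := by
    simp only [r, s]
    field_simp
    ring
  refine exists_card_three_addOrderOf_eq_two ha₁ ha₃ (e₁ := 0) (e₂ := r) (e₃ := s) ?_ ?_ ?_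
    (by simp only [r, s]; field_simp; ring) (by rw [← hrs]; ring) (by rw [ha₆]; ring)
  · exact fun h => ha₄ (by rw [← hrs, ← h, zero_mul])
  · exact fun h => ha₄ (by rw [← hrs, ← h, mul_zero])
  · exact fun h => hd (by rw [← hsub, h, sub_self])

lemma exists_card_three_addOrderOf_eq_two_iff [NeZero (2 : F)] (ha₁ : W.a₁ = 0)
    (ha₃ : W.a₃ = 0) (ha₆ : W.a₆ = 0) (ha₄ : W.a₄ ≠ 0) (hdisc : discrim 1 W.a₂ W.a₄ ≠ 0) :
    (∃ S : Finset W.Point, S.card = 3 ∧ ∀ P ∈ S, addOrderOf P = 2) ↔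
      ∃ d, discrim 1 W.a₂ W.a₄ = d ^ 2 := by
  constructor
  · rintro ⟨S, hS, hS₂⟩
    exact exists_discrim_eq_sq_of_one_lt_card ha₁ ha₃ ha₆ (by omega) hS₂
  · rintro ⟨d, hd⟩
    refine exists_card_three_addOrderOf_eq_two_of_discrim_eq_sq ha₁ ha₃ ha₆ ha₄ ?_ hd
    rintro rfl
    exact hdisc (by rw [hd]; ring)

end Point

end WeierstrassCurve.Affine

lemma exists_sq_mul_eq_sq_iff {F : Type*} [Field F] {c : F} (hc : c ≠ 0) (q : F) :
    (∃ d, c ^ 2 * q = d ^ 2) ↔ ∃ b, q = b ^ 2 := by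
  constructor
  · rintro ⟨d, hd⟩
    refine ⟨d / c, ?_⟩
    field_simp
    linear_combination hd
  · rintro ⟨b, rfl⟩
    exact ⟨c * b, by ring⟩

lemma sq_sub_six_mul_add_one_ne_zero (a : ℚ) : a ^ 2 - 6 * a + 1 ≠ 0 := by
  intro h
  have h8 : IsSquare (8 : ℚ) := ⟨a - 3, by linear_combination -h⟩
  rw [Rat.isSquare_ofNat_iff] at h8
  norm_num at h8

namespace Ecurve

lemma discrim_eq (a : ℚ) :
    discrim 1 (Ecurve a).a₂ (Ecurve a).a₄ = ((a + 1) * (a - 1) ^ 2) ^ 2 * (a ^ 2 - 6 * a + 1) := by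
  simp only [Ecurve, discrim]
  ring

lemma exists_card_three_addOrderOf_eq_two_iff {a : ℚ} (ha : a * (a - 1) * (a + 1) ≠ 0) :
    (∃ S : Finset (Ecurve a).Point, S.card = 3 ∧ ∀ P ∈ S, addOrderOf P = 2) ↔
      ∃ b, a ^ 2 - 6 * a + 1 = b ^ 2 := by
  obtain ⟨ha₀, ha₁⟩ := mul_ne_zero_iff.1 (left_ne_zero_of_mul ha)
  have hc : (a + 1) * (a - 1) ^ 2 ≠ 0 := mul_ne_zero (right_ne_zero_of_mul ha) (pow_ne_zero _ ha₁)
  have hdisc : discrim 1 (Ecurve a).a₂ (Ecurve a).a₄ ≠ 0 := by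
    rw [discrim_eq]
    exact mul_ne_zero (pow_ne_zero _ hc) (sq_sub_six_mul_add_one_ne_zero a)
  rw [WeierstrassCurve.Affine.Point.exists_card_three_addOrderOf_eq_two_iff rfl rfl rfl
    (by simp [Ecurve, ha₀]) hdisc, discrim_eq, exists_sq_mul_eq_sq_iff hc]

end Ecurve

section LineThroughZeroOne

variable {F : Type*} [Field F]

/- On the line `b = 1 + k a` through `(0, 1)`, the factor `a` accounts for that point of the conic
`b² = a² - 6a + 1`, and the other factor cuts out its second intersection with the conic. -/
lemma sq_sub_six_mul_add_one_sub_sq (a k : F) :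
    a ^ 2 - 6 * a + 1 - (1 + k * a) ^ 2 = a * ((1 - k ^ 2) * a - 2 * (k + 3)) := by
  ring

lemma sq_sub_six_mul_add_one_eq_sq_of_eq_div {k : F} (hk₁ : k ≠ 1) (hk₂ : k ≠ -1) :
    (2 * (k + 3) / (1 - k ^ 2)) ^ 2 - 6 * (2 * (k + 3) / (1 - k ^ 2)) + 1 =
      (1 + k * (2 * (k + 3) / (1 - k ^ 2))) ^ 2 := by
  have hk : 1 - k ^ 2 ≠ 0 := sub_ne_zero.2 fun h => by
    rcases sq_eq_one_iff.1 h.symm with h | h <;> contradiction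
  rw [← sub_eq_zero, sq_sub_six_mul_add_one_sub_sq, mul_div_cancel₀ _ hk, sub_self, mul_zero]

lemma exists_eq_div_of_sq_sub_six_mul_add_one_eq_sq [CharZero F] {a b : F} (ha : a ≠ 0)
    (hb : a ^ 2 - 6 * a + 1 = b ^ 2) :
    ∃ k : F, k ≠ 1 ∧ k ≠ -1 ∧ a = 2 * (k + 3) / (1 - k ^ 2) := by
  obtain ⟨k, hline⟩ : ∃ k, b = 1 + k * a := ⟨(b - 1) / a, by field_simp; ring⟩
  have hk : (1 - k ^ 2) * a = 2 * (k + 3) := by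
    have h := sq_sub_six_mul_add_one_sub_sq a k
    rw [← hline, hb, sub_self, eq_comm, mul_eq_zero_iff_left ha, sub_eq_zero] at h
    exact h
  have hk₀ : 1 - k ^ 2 ≠ 0 := by
    intro h₀
    rw [h₀, zero_mul] at hk
    obtain rfl : k = -3 := by linear_combination -hk / 2
    norm_num at h₀
  refine ⟨k, fun h => hk₀ (by rw [h]; norm_num), fun h => hk₀ (by rw [h]; norm_num), ?_⟩
  rw [eq_div_iff hk₀, mul_comm, hk]

end LineThroughZeroOne

theorem stmt_8 :
    (∀ a : ℚ, a * (a - 1) * (a + 1) ≠ 0 →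
      ((∃ S : Finset (Ecurve a).Point, S.card = 3 ∧ ∀ P ∈ S, addOrderOf P = 2) ↔
        ∃ b : ℚ, a ^ 2 - 6 * a + 1 = b ^ 2)) ∧
    (∀ a b : ℚ, a ≠ 0 → a ^ 2 - 6 * a + 1 = b ^ 2 →
      ∃ k : ℚ, k ≠ 1 ∧ k ≠ -1 ∧ a = 2 * (k + 3) / (1 - k ^ 2)) ∧
    (∀ k : ℚ, k ≠ 1 → k ≠ -1 →
      ∃ b : ℚ, (2 * (k + 3) / (1 - k ^ 2)) ^ 2 - 6 * (2 * (k + 3) / (1 - k ^ 2)) + 1 = b ^ 2) :=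
  ⟨fun _ ha => Ecurve.exists_card_three_addOrderOf_eq_two_iff ha,
    fun _ _ ha hb => exists_eq_div_of_sq_sub_six_mul_add_one_eq_sq ha hb,
    fun _ hk₁ hk₂ => ⟨_, sq_sub_six_mul_add_one_eq_sq_of_eq_div hk₁ hk₂⟩⟩
end

section
/- The point P = (625, 100000) lies on the elliptic curve E_0 : y^2 = x^3 + 10334x^2 + 9150625x and has infinite order in E_0(Q). -/
/-!
Write the curve as `y² = x³ + a₂x² + a₄x + a₆` with `v(aᵢ) ≤ 1` for a nonarchimedean absolute
value `v`. In the coordinates `t = x/y`, `s = 1/y` at the point at infinity it reads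
`s = t³ + a₂t²s + a₄ts² + a₆s³`, which forces `v(s) = v(t)³` whenever `v(s) < 1`. For `ρ < 1` the
points with `v(t) ≤ ρ` are closed under addition and `t` is additive on them up to an error of
size `ρ³`: the chord through two such points has slope `v`-small in the `(t, s)`-plane, and Vieta's
formulas for the third intersection give `t(P₁ + P₂) - t(P₁) - t(P₂)`. Hence
`v(t(qP) - q t(P)) ≤ v(t(P))³`. For the `p`-adic absolute value a point `P ≠ 0` with `qP = 0`,
`q` prime, would give `|q|ₚ ≤ v(t(P))² ≤ p⁻²`, which is absurd. So a rational point whose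
`y`-coordinate is not `p`-integral has infinite order; on `E₀` the point
`2P = (47961/25, -31287216/125)` is such a point for `p = 5`.
-/

/-- The elliptic curve `E₀ : y² = x³ + 10334x² + 9150625x` over `ℚ`. -/
def E0 : WeierstrassCurve.Affine ℚ :=
  { a₁ := 0, a₂ := 10334, a₃ := 0, a₄ := 9150625, a₆ := 0 }

namespace IsNonarchimedean

variable {R : Type*} [Ring R] {v : AbsoluteValue R ℝ}

lemma abv_add_le_of_le (hv : IsNonarchimedean v) {a b : R} {c : ℝ} (ha : v a ≤ c) (hb : v b ≤ c) :
    v (a + b) ≤ c :=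
  (hv a b).trans (max_le ha hb)

lemma abv_add_lt_of_lt (hv : IsNonarchimedean v) {a b : R} {c : ℝ} (ha : v a < c) (hb : v b < c) :
    v (a + b) < c :=
  (hv a b).trans_lt (max_lt ha hb)

lemma abv_sub_le_of_le (hv : IsNonarchimedean v) {a b : R} {c : ℝ} (ha : v a ≤ c) (hb : v b ≤ c) :
    v (a - b) ≤ c := by
  rw [sub_eq_add_neg]
  exact hv.abv_add_le_of_le ha (by rwa [map_neg_eq_map])

lemma abv_one_sub_eq_one [Nontrivial R] (hv : IsNonarchimedean v) {a : R} (ha : v a < 1) : v (1 - a) = 1 := by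
  rw [sub_eq_add_neg, hv.add_eq_left_of_lt (by rwa [map_neg_eq_map, map_one]), map_one]

end IsNonarchimedean

lemma IsOfFinAddOrder.exists_addOrderOf_nsmul_prime {G : Type*} [AddMonoid G] {a : G}
    (ha : IsOfFinAddOrder a) (ha₀ : a ≠ 0) : ∃ n q : ℕ, q.Prime ∧ addOrderOf (n • a) = q :=
  ⟨addOrderOf a / (addOrderOf a).minFac, _,
    Nat.minFac_prime fun h₁ ↦ ha₀ (by simpa [h₁] using addOrderOf_nsmul_eq_zero a),
    addOrderOf_nsmul_addOrderOf_sub ha.addOrderOf_pos.ne' (Nat.minFac_dvd _)⟩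

namespace Rat.AbsoluteValue

variable {p : ℕ} [Fact p.Prime]

lemma padic_eq_norm (q : ℚ) : padic p q = ‖(q : ℚ_[p])‖ := by
  rw [padic_eq_padicNorm, Padic.eq_padicNorm]

lemma isNonarchimedean_padic : IsNonarchimedean (padic p) := fun a b ↦ by
  simpa only [padic_eq_norm, Rat.cast_add] using Padic.nonarchimedean (a : ℚ_[p]) b

lemma padic_le_inv_of_lt_one {q : ℚ} (hq : padic p q < 1) : padic p q ≤ (p : ℝ)⁻¹ := by
  rw [padic_eq_norm] at hq ⊢
  simpa using (Padic.norm_le_pow_iff_norm_lt_pow_add_one (q : ℚ_[p]) (-1)).mpr (by simpa using hq)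

lemma inv_sq_lt_padic_of_prime {q : ℕ} (hq : q.Prime) : ((p : ℝ)⁻¹) ^ 2 < padic p q := by
  by_contra! h
  have hdvd : ((p ^ 2 : ℕ) : ℤ) ∣ (q : ℤ) := by
    rw [Nat.cast_pow, ← Padic.norm_int_le_pow_iff_dvd]
    rw [padic_eq_norm] at h
    simpa [zpow_neg, inv_pow] using h
  rcases hq.eq_one_or_self_of_dvd _ (Int.natCast_dvd_natCast.mp hdvd) with h1 | h1
  · exact (Fact.out : p.Prime).one_lt.ne' (by simpa using h1)
  · exact Nat.Prime.not_prime_pow le_rfl (h1 ▸ hq)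

end Rat.AbsoluteValue

lemma AbsoluteValue.map_mul_le_of_le_one {R : Type*} [Semiring R] (v : AbsoluteValue R ℝ) {a : R}
    (ha : v a ≤ 1) (x : R) : v (a * x) ≤ v x := by
  rw [map_mul]
  exact mul_le_of_le_one_left (v.nonneg x) ha

namespace WeierstrassCurve.Affine

variable {F : Type*} [Field F] {v : AbsoluteValue F ℝ} {W : Affine F}

variable (v W) in
structure HasIntegralCoeffs : Prop where
  a₂ : v W.a₂ ≤ 1
  a₄ : v W.a₄ ≤ 1
  a₆ : v W.a₆ ≤ 1

variable (W) in
/-- The curve `y² = x³ + a₂x² + a₄x + a₆` in the coordinates `t = x / y`, `s = 1 / y` around the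
point at infinity. -/
def LocalEquation (t s : F) : Prop :=
  s = t ^ 3 + W.a₂ * (t ^ 2 * s) + W.a₄ * (t * s ^ 2) + W.a₆ * s ^ 3

lemma equation_iff_of_isCharNeTwoNF [W.IsCharNeTwoNF] (x y : F) :
    W.Equation x y ↔ y ^ 2 = x ^ 3 + W.a₂ * x ^ 2 + W.a₄ * x + W.a₆ := by
  simp [equation_iff]

lemma Equation.localEquation [W.IsCharNeTwoNF] {x y : F} (h : W.Equation x y) (hy : y ≠ 0) :
    W.LocalEquation (x / y) y⁻¹ := by
  rw [equation_iff_of_isCharNeTwoNF] at h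
  calc y⁻¹ = y⁻¹ ^ 3 * y ^ 2 := by field_simp
    _ = _ := by rw [h]; ring

lemma LocalEquation.abv_sub_pow_three_lt (hv : IsNonarchimedean v) (hW : HasIntegralCoeffs v W)
    {t s : F} (h : W.LocalEquation t s) (hs₀ : s ≠ 0) (hs₁ : v s < 1) :
    v (s - t ^ 3) < max (v s) (v t ^ 3) := by
  have hs : 0 < v s := v.pos hs₀
  have h₂ : v (W.a₂ * (t ^ 2 * s)) ≤ v t ^ 2 * v s :=
    (v.map_mul_le_of_le_one hW.a₂ _).trans_eq (by simp)
  have h₄ : v (W.a₄ * (t * s ^ 2)) ≤ v t * v s ^ 2 :=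
    (v.map_mul_le_of_le_one hW.a₄ _).trans_eq (by simp)
  have h₆ : v (W.a₆ * s ^ 3) ≤ v s ^ 3 := (v.map_mul_le_of_le_one hW.a₆ _).trans_eq (by simp)
  rw [LocalEquation] at h
  rw [show s - t ^ 3 = W.a₂ * (t ^ 2 * s) + W.a₄ * (t * s ^ 2) + W.a₆ * s ^ 3 by
    linear_combination h]
  rcases le_or_gt (v t) (v s) with hts | hst
  · refine lt_max_of_lt_left (lt_of_le_of_lt ?_
      (pow_lt_self_of_lt_one₀ hs hs₁ (by norm_num : 1 < 3)))
    refine hv.abv_add_le_of_le (hv.abv_add_le_of_le (h₂.trans ?_) (h₄.trans ?_)) h₆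
    · calc v t ^ 2 * v s ≤ v s ^ 2 * v s := by gcongr
        _ = v s ^ 3 := by ring
    · calc v t * v s ^ 2 ≤ v s * v s ^ 2 := by gcongr
        _ = v s ^ 3 := by ring
  · have ht : 0 < v t := hs.trans hst
    refine lt_max_of_lt_right (hv.abv_add_lt_of_lt (hv.abv_add_lt_of_lt (h₂.trans_lt ?_)
      (h₄.trans_lt ?_)) (h₆.trans_lt (by gcongr)))
    · calc v t ^ 2 * v s < v t ^ 2 * v t := by gcongr
        _ = v t ^ 3 := by ring
    · calc v t * v s ^ 2 < v t * v t ^ 2 := by gcongr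
        _ = v t ^ 3 := by ring

lemma LocalEquation.abv_pow_three (hv : IsNonarchimedean v) (hW : HasIntegralCoeffs v W)
    {t s : F} (h : W.LocalEquation t s) (hs₀ : s ≠ 0) (hs₁ : v s < 1) : v t ^ 3 = v s := by
  have hrest := h.abv_sub_pow_three_lt hv hW hs₀ hs₁
  have hs : s = t ^ 3 + (s - t ^ 3) := by ring
  rcases lt_trichotomy (v t ^ 3) (v s) with hlt | heq | hgt
  · rw [max_eq_left hlt.le] at hrest
    have : v (t ^ 3 + (s - t ^ 3)) < v s := hv.abv_add_lt_of_lt (by rwa [map_pow]) hrest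
    rw [← hs] at this
    exact absurd this (lt_irrefl _)
  · exact heq
  · rw [max_eq_right hgt.le] at hrest
    have : v (t ^ 3 + (s - t ^ 3)) = v (t ^ 3) := hv.add_eq_left_of_lt (by rwa [map_pow])
    rw [← hs, map_pow] at this
    exact this.symm

variable (W) in
/-- `chordNum / chordDen` is the slope `(s₂ - s₁) / (t₂ - t₁)` of the chord through two points of
`W.LocalEquation` (see `LocalEquation.sub_mul_chordDen`), and its tangent slope when they
coincide. -/
def chordNum (t₁ t₂ s₂ : F) : F :=
  t₁ ^ 2 + t₁ * t₂ + t₂ ^ 2 + W.a₂ * ((t₁ + t₂) * s₂) + W.a₄ * s₂ ^ 2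

variable (W) in
def chordDen (t₁ s₁ s₂ : F) : F :=
  1 - (W.a₂ * t₁ ^ 2 + W.a₄ * (t₁ * (s₁ + s₂)) + W.a₆ * (s₁ ^ 2 + s₁ * s₂ + s₂ ^ 2))

lemma LocalEquation.sub_mul_chordDen {t₁ s₁ t₂ s₂ : F} (h₁ : W.LocalEquation t₁ s₁)
    (h₂ : W.LocalEquation t₂ s₂) :
    (s₂ - s₁) * W.chordDen t₁ s₁ s₂ = (t₂ - t₁) * W.chordNum t₁ t₂ s₂ := by
  rw [LocalEquation] at h₁ h₂
  rw [chordDen, chordNum]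
  linear_combination h₂ - h₁

/-- `l * t + ν * s = 1` is the line `y = l * x + ν` in the coordinates `t = x / y`, `s = 1 / y`. -/
lemma LocalEquation.mul_chordDen_add_mul_chordNum_eq_zero {t₁ s₁ t₂ s₂ l ν : F}
    (h₁ : W.LocalEquation t₁ s₁) (h₂ : W.LocalEquation t₂ s₂) (hl₁ : l * t₁ + ν * s₁ = 1)
    (hl₂ : l * t₂ + ν * s₂ = 1) (hne : (t₁, s₁) ≠ (t₂, s₂)) (hD : W.chordDen t₁ s₁ s₂ ≠ 0) :
    l * W.chordDen t₁ s₁ s₂ + ν * W.chordNum t₁ t₂ s₂ = 0 := by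
  have hchord := h₁.sub_mul_chordDen h₂
  have hline : l * (t₁ - t₂) = ν * (s₂ - s₁) := by linear_combination hl₁ - hl₂
  have ht : t₂ - t₁ ≠ 0 := by
    intro ht
    rw [ht, zero_mul, mul_eq_zero, sub_eq_zero] at hchord
    exact hne (Prod.ext (sub_eq_zero.mp ht).symm (hchord.resolve_right hD).symm)
  refine (mul_eq_zero.mp ?_).resolve_left ht
  linear_combination (-W.chordDen t₁ s₁ s₂) * hline - ν * hchord

lemma abv_chordNum_le (hv : IsNonarchimedean v) (hW : HasIntegralCoeffs v W) {ρ : ℝ}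
    (hρ₀ : 0 ≤ ρ) (hρ₁ : ρ ≤ 1) {t₁ t₂ s₂ : F} (ht₁ : v t₁ ≤ ρ) (ht₂ : v t₂ ≤ ρ)
    (hs₂ : v s₂ ≤ ρ ^ 3) : v (W.chordNum t₁ t₂ s₂) ≤ ρ ^ 2 := by
  rw [chordNum]
  refine hv.abv_add_le_of_le (hv.abv_add_le_of_le (hv.abv_add_le_of_le
    (hv.abv_add_le_of_le ?_ ?_) ?_) ?_) ?_
  · rw [map_pow]; gcongr
  · rw [map_mul, sq]; gcongr
  · rw [map_pow]; gcongr
  · refine (v.map_mul_le_of_le_one hW.a₂ _).trans ?_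
    rw [map_mul]
    calc v (t₁ + t₂) * v s₂ ≤ ρ * ρ ^ 3 := by gcongr; exact hv.abv_add_le_of_le ht₁ ht₂
      _ ≤ ρ ^ 2 := by nlinarith [pow_le_pow_of_le_one hρ₀ hρ₁ (show 2 ≤ 4 by norm_num)]
  · refine (v.map_mul_le_of_le_one hW.a₄ _).trans ?_
    rw [map_pow]
    calc v s₂ ^ 2 ≤ (ρ ^ 3) ^ 2 := by gcongr
      _ ≤ ρ ^ 2 := by rw [← pow_mul]; exact pow_le_pow_of_le_one hρ₀ hρ₁ (by norm_num)

lemma abv_chordDen (hv : IsNonarchimedean v) (hW : HasIntegralCoeffs v W) {ρ : ℝ}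
    (hρ₀ : 0 ≤ ρ) (hρ₁ : ρ < 1) {t₁ s₁ s₂ : F} (ht₁ : v t₁ ≤ ρ)
    (hs₁ : v s₁ ≤ ρ ^ 3) (hs₂ : v s₂ ≤ ρ ^ 3) : v (W.chordDen t₁ s₁ s₂) = 1 := by
  have hs₁' : v s₁ ≤ ρ := hs₁.trans (pow_le_of_le_one hρ₀ hρ₁.le three_ne_zero)
  have hs₂' : v s₂ ≤ ρ := hs₂.trans (pow_le_of_le_one hρ₀ hρ₁.le three_ne_zero)
  have hsq : ρ ^ 2 < 1 := pow_lt_one₀ hρ₀ hρ₁ two_ne_zero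
  rw [chordDen]
  refine hv.abv_one_sub_eq_one (lt_of_le_of_lt ?_ hsq)
  refine hv.abv_add_le_of_le (hv.abv_add_le_of_le ?_ ?_) ?_
  · refine (v.map_mul_le_of_le_one hW.a₂ _).trans ?_
    rw [map_pow]; gcongr
  · refine (v.map_mul_le_of_le_one hW.a₄ _).trans ?_
    rw [map_mul, sq]; gcongr; exact hv.abv_add_le_of_le hs₁' hs₂'
  · refine (v.map_mul_le_of_le_one hW.a₆ _).trans ?_
    refine hv.abv_add_le_of_le (hv.abv_add_le_of_le ?_ ?_) ?_
    · rw [map_pow]; gcongr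
    · rw [map_mul, sq]; gcongr
    · rw [map_pow]; gcongr

lemma abv_localCoords_le [W.IsCharNeTwoNF] (hv : IsNonarchimedean v) (hW : HasIntegralCoeffs v W)
    {ρ : ℝ} (hρ₀ : 0 ≤ ρ) (hρ₁ : ρ < 1) {x y : F} (h : W.Equation x y) (hy : 1 ≤ ρ ^ 3 * v y) :
    y ≠ 0 ∧ v y⁻¹ ≤ ρ ^ 3 ∧ v (x / y) ≤ ρ := by
  have hy₀ : y ≠ 0 := by rintro rfl; norm_num at hy
  have hs : v y⁻¹ ≤ ρ ^ 3 := by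
    rw [map_inv₀, inv_le_iff_one_le_mul₀ (v.pos hy₀)]
    exact hy
  refine ⟨hy₀, hs, ?_⟩
  have hcube := (h.localEquation hy₀).abv_pow_three hv hW (inv_ne_zero hy₀)
    (hs.trans_lt (pow_lt_one₀ hρ₀ hρ₁ three_ne_zero))
  exact (pow_le_pow_iff_left₀ (v.nonneg _) hρ₀ three_ne_zero).mp (hcube ▸ hs)

lemma slope_mul_sub_add [DecidableEq F] {x₁ x₂ y₁ y₂ : F} (h₁ : W.Equation x₁ y₁)
    (h₂ : W.Equation x₂ y₂) (hxy : ¬(x₁ = x₂ ∧ y₁ = W.negY x₂ y₂)) :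
    W.slope x₁ x₂ y₁ y₂ * (x₂ - x₁) + y₁ = y₂ := by
  by_cases hx : x₁ = x₂
  · rw [hx, sub_self, mul_zero, zero_add]
    exact Y_eq_of_Y_ne h₁ h₂ hx fun hy ↦ hxy ⟨hx, hy⟩
  · rw [slope_of_X_ne hx]
    field_simp [sub_ne_zero.mpr hx]
    ring

lemma addX_vieta [W.IsCharNeTwoNF] [DecidableEq F] {x₁ x₂ y₁ y₂ : F} (h₁ : W.Equation x₁ y₁)
    (h₂ : W.Equation x₂ y₂) (hxy : ¬(x₁ = x₂ ∧ y₁ = W.negY x₂ y₂)) :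
    x₁ * x₂ + x₁ * W.addX x₁ x₂ (W.slope x₁ x₂ y₁ y₂) + x₂ * W.addX x₁ x₂ (W.slope x₁ x₂ y₁ y₂) =
        W.a₄ - 2 * W.slope x₁ x₂ y₁ y₂ * (y₁ - W.slope x₁ x₂ y₁ y₂ * x₁) ∧
      x₁ * x₂ * W.addX x₁ x₂ (W.slope x₁ x₂ y₁ y₂) =
        (y₁ - W.slope x₁ x₂ y₁ y₂ * x₁) ^ 2 - W.a₆ := by
  have h := addPolynomial_slope h₁ h₂ hxy
  rw [addPolynomial_eq, neg_inj, Cubic.prod_X_sub_C_eq, Cubic.toPoly_injective, Cubic.ext_iff] at h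
  obtain ⟨-, -, hc, hd⟩ := h
  simp only [a₁_of_isCharNeTwoNF, a₃_of_isCharNeTwoNF] at hc hd
  constructor
  · linear_combination -hc
  · linear_combination hd

lemma slope_mul_chordDen_add_mul_chordNum_eq_zero [W.IsCharNeTwoNF] [DecidableEq F]
    {x₁ x₂ y₁ y₂ : F} (h₁ : W.Equation x₁ y₁) (h₂ : W.Equation x₂ y₂)
    (hxy : ¬(x₁ = x₂ ∧ y₁ = W.negY x₂ y₂)) (hy₁ : y₁ ≠ 0) (hy₂ : y₂ ≠ 0)
    (hD : W.chordDen (x₁ / y₁) y₁⁻¹ y₂⁻¹ ≠ 0) :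
    W.slope x₁ x₂ y₁ y₂ * W.chordDen (x₁ / y₁) y₁⁻¹ y₂⁻¹ +
      (y₁ - W.slope x₁ x₂ y₁ y₂ * x₁) * W.chordNum (x₁ / y₁) (x₂ / y₂) y₂⁻¹ = 0 := by
  by_cases hx : x₁ = x₂
  · have hy : y₁ ≠ W.negY x₂ y₂ := fun hy ↦ hxy ⟨hx, hy⟩
    obtain rfl := Y_eq_of_Y_ne h₁ h₂ hx hy
    subst hx
    have hneg : W.negY x₁ y₁ = -y₁ := by simp [negY]
    rw [hneg] at hy
    have hl : W.slope x₁ x₁ y₁ y₁ * (2 * y₁) = 3 * x₁ ^ 2 + 2 * W.a₂ * x₁ + W.a₄ := by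
      rw [slope_of_Y_ne rfl (hneg ▸ hy), hneg, show (2 : F) * y₁ = y₁ - -y₁ by ring,
        div_mul_cancel₀ _ (sub_ne_zero.mpr hy)]
      simp
    rw [equation_iff_of_isCharNeTwoNF] at h₁
    rw [chordDen, chordNum]
    field_simp
    linear_combination 3 * W.slope x₁ x₁ y₁ y₁ * h₁ - y₁ * hl
  · have hline := slope_mul_sub_add h₁ h₂ hxy
    refine (h₁.localEquation hy₁).mul_chordDen_add_mul_chordNum_eq_zero
      (h₂.localEquation hy₂) ?_ ?_ ?_ hD
    · field_simp
      ring
    · field_simp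
      linear_combination hline
    · intro h
      obtain ⟨ht, hs⟩ := Prod.mk.inj h
      obtain rfl := inv_injective hs
      exact hx ((div_left_inj' hy₁).mp ht)


lemma abv_slope_le [W.IsCharNeTwoNF] [DecidableEq F] (hv : IsNonarchimedean v)
    (hW : HasIntegralCoeffs v W) {ρ : ℝ} (hρ₀ : 0 ≤ ρ) (hρ₁ : ρ < 1) {x₁ x₂ y₁ y₂ : F}
    (h₁ : W.Equation x₁ y₁) (h₂ : W.Equation x₂ y₂) (hxy : ¬(x₁ = x₂ ∧ y₁ = W.negY x₂ y₂))
    (hy₁ : 1 ≤ ρ ^ 3 * v y₁) (hy₂ : 1 ≤ ρ ^ 3 * v y₂) :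
    v (W.slope x₁ x₂ y₁ y₂) ≤ ρ ^ 2 * v (y₁ - W.slope x₁ x₂ y₁ y₂ * x₁) ∧
      1 ≤ ρ ^ 3 * v (y₁ - W.slope x₁ x₂ y₁ y₂ * x₁) := by
  obtain ⟨hy₁₀, hs₁, ht₁⟩ := abv_localCoords_le hv hW hρ₀ hρ₁ h₁ hy₁
  obtain ⟨hy₂₀, hs₂, ht₂⟩ := abv_localCoords_le hv hW hρ₀ hρ₁ h₂ hy₂
  have hD := abv_chordDen hv hW hρ₀ hρ₁ ht₁ hs₁ hs₂
  have hN := abv_chordNum_le hv hW hρ₀ hρ₁.le ht₁ ht₂ hs₂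
  have hrel := slope_mul_chordDen_add_mul_chordNum_eq_zero h₁ h₂ hxy hy₁₀ hy₂₀
    (v.ne_zero_iff.mp (by simp [hD]))
  set l := W.slope x₁ x₂ y₁ y₂
  set ν := y₁ - l * x₁
  have hl : v l ≤ ρ ^ 2 * v ν := by
    have : v l = v ν * v (W.chordNum (x₁ / y₁) (x₂ / y₂) y₂⁻¹) := by
      rw [← mul_one (v l), ← hD, ← map_mul, eq_neg_of_add_eq_zero_left hrel, map_neg_eq_map,
        map_mul]
    rw [this, mul_comm]
    exact mul_le_mul_of_nonneg_right hN (v.nonneg _)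
  refine ⟨hl, ?_⟩
  have hline : l * (x₁ / y₁) + ν * y₁⁻¹ = 1 := by field_simp; ring
  calc (1 : ℝ) = v (l * (x₁ / y₁) + ν * y₁⁻¹) := by rw [hline, map_one]
    _ ≤ ρ ^ 3 * v ν := by
      refine hv.abv_add_le_of_le ?_ ?_ <;> rw [map_mul]
      · calc v l * v (x₁ / y₁) ≤ ρ ^ 2 * v ν * ρ := by gcongr
          _ = ρ ^ 3 * v ν := by ring
      · rw [mul_comm]
        gcongr

variable (W) in
/-- `∏ᵢ (l xᵢ + ν)` over the three roots `xᵢ` of `(l x + ν)² = x³ + a₂x² + a₄x + a₆`, by Vieta's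
formulas (`lineProd_eq`). -/
def lineProd (l ν : F) : F :=
  ν ^ 3 - (W.a₂ * (l * ν ^ 2) - W.a₄ * (l ^ 2 * ν) + W.a₆ * l ^ 3)

variable (W) in
/-- `∑ᵢ xᵢ ∏_{j ≠ i} (l xⱼ + ν)` over the same three roots (`lineSum_eq`). -/
def lineSum (l ν : F) : F :=
  -(W.a₂ * ν ^ 2) + 2 * (W.a₄ * (l * ν)) - 3 * (W.a₆ * l ^ 2)

lemma lineProd_eq {x₁ x₂ x₃ l ν : F} (he₁ : x₁ + x₂ + x₃ = l ^ 2 - W.a₂)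
    (he₂ : x₁ * x₂ + x₁ * x₃ + x₂ * x₃ = W.a₄ - 2 * l * ν) (he₃ : x₁ * x₂ * x₃ = ν ^ 2 - W.a₆) :
    (l * x₁ + ν) * (l * x₂ + ν) * (l * x₃ + ν) = W.lineProd l ν := by
  rw [lineProd]
  linear_combination l ^ 3 * he₃ + l ^ 2 * ν * he₂ + l * ν ^ 2 * he₁

lemma lineSum_eq {x₁ x₂ x₃ l ν : F} (he₁ : x₁ + x₂ + x₃ = l ^ 2 - W.a₂)
    (he₂ : x₁ * x₂ + x₁ * x₃ + x₂ * x₃ = W.a₄ - 2 * l * ν) (he₃ : x₁ * x₂ * x₃ = ν ^ 2 - W.a₆) :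
    x₁ * (l * x₂ + ν) * (l * x₃ + ν) + x₂ * (l * x₁ + ν) * (l * x₃ + ν) +
      x₃ * (l * x₁ + ν) * (l * x₂ + ν) = W.lineSum l ν := by
  rw [lineSum]
  linear_combination 3 * l ^ 2 * he₃ + 2 * l * ν * he₂ + ν ^ 2 * he₁

lemma abv_lineProd (hv : IsNonarchimedean v) (hW : HasIntegralCoeffs v W) {l ν : F}
    (hlν : v l < v ν) : v (W.lineProd l ν) = v ν ^ 3 := by
  have hν : 0 < v ν := (v.nonneg l).trans_lt hlν
  have h₂ : v (W.a₂ * (l * ν ^ 2)) ≤ v l * v ν ^ 2 :=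
    (v.map_mul_le_of_le_one hW.a₂ _).trans_eq (by simp)
  have h₄ : v (W.a₄ * (l ^ 2 * ν)) ≤ v l * v ν ^ 2 := by
    refine (v.map_mul_le_of_le_one hW.a₄ _).trans ?_
    calc v (l ^ 2 * ν) = v l * (v l * v ν) := by simp only [map_mul, map_pow]; ring
      _ ≤ v l * (v ν * v ν) := by gcongr
      _ = v l * v ν ^ 2 := by ring
  have h₆ : v (W.a₆ * l ^ 3) ≤ v l * v ν ^ 2 := by
    refine (v.map_mul_le_of_le_one hW.a₆ _).trans ?_
    calc v (l ^ 3) = v l * v l ^ 2 := by rw [map_pow]; ring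
      _ ≤ v l * v ν ^ 2 := by gcongr
  rw [lineProd, sub_eq_add_neg, hv.add_eq_left_of_lt, map_pow]
  rw [map_neg_eq_map, map_pow]
  calc _ ≤ v l * v ν ^ 2 := hv.abv_add_le_of_le (hv.abv_sub_le_of_le h₂ h₄) h₆
    _ < v ν * v ν ^ 2 := by gcongr
    _ = v ν ^ 3 := by ring

lemma abv_lineSum_le (hv : IsNonarchimedean v) (hW : HasIntegralCoeffs v W) {l ν : F}
    (hlν : v l ≤ v ν) : v (W.lineSum l ν) ≤ v ν ^ 2 := by
  have hnat (n : ℕ) (a : F) : v (n * a) ≤ v a :=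
    v.map_mul_le_of_le_one (hv.apply_natCast_le_one (f := v)) a
  rw [lineSum]
  refine hv.abv_sub_le_of_le (hv.abv_add_le_of_le ?_ ?_) ?_
  · rw [map_neg_eq_map]
    exact (v.map_mul_le_of_le_one hW.a₂ _).trans_eq (map_pow _ _ _)
  · refine (hnat 2 _).trans ((v.map_mul_le_of_le_one hW.a₄ _).trans ?_)
    rw [map_mul, sq]
    gcongr
  · refine (hnat 3 _).trans ((v.map_mul_le_of_le_one hW.a₆ _).trans ?_)
    rw [map_pow]
    gcongr

lemma one_le_mul_abv_line (hv : IsNonarchimedean v) {ρ : ℝ} (hρ₀ : 0 ≤ ρ) {x l ν : F}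
    (hl : v l ≤ ρ ^ 2 * v ν) (hν : 1 ≤ ρ ^ 3 * v ν) (hy : l * x + ν ≠ 0)
    (ht : v (x / (l * x + ν)) ≤ ρ) : 1 ≤ ρ ^ 3 * v (l * x + ν) := by
  have hν₀ : 0 < v ν := by
    by_contra! h
    nlinarith [v.nonneg ν, pow_nonneg hρ₀ 3]
  have hx : v x ≤ ρ * v (l * x + ν) := by rwa [map_div₀, div_le_iff₀ (v.pos hy)] at ht
  have : v ν ≤ v ν * (ρ ^ 3 * v (l * x + ν)) := by
    calc v ν = v ((l * x + ν) - l * x) := by rw [add_sub_cancel_left]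
      _ ≤ _ := hv.abv_sub_le_of_le ?_ ?_
    · calc v (l * x + ν) ≤ ρ ^ 3 * v ν * v (l * x + ν) := le_mul_of_one_le_left (v.nonneg _) hν
        _ = v ν * (ρ ^ 3 * v (l * x + ν)) := by ring
    · rw [map_mul]
      calc v l * v x ≤ ρ ^ 2 * v ν * (ρ * v (l * x + ν)) := by gcongr
        _ = v ν * (ρ ^ 3 * v (l * x + ν)) := by ring
  exact le_of_mul_le_mul_left (by rwa [mul_one]) hν₀

lemma abv_third_root_le (hv : IsNonarchimedean v) (hW : HasIntegralCoeffs v W) {ρ : ℝ}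
    (hρ₀ : 0 ≤ ρ) (hρ₁ : ρ < 1) {x₁ x₂ x₃ l ν : F} (he₁ : x₁ + x₂ + x₃ = l ^ 2 - W.a₂)
    (he₂ : x₁ * x₂ + x₁ * x₃ + x₂ * x₃ = W.a₄ - 2 * l * ν) (he₃ : x₁ * x₂ * x₃ = ν ^ 2 - W.a₆)
    (hl : v l ≤ ρ ^ 2 * v ν) (hν : 1 ≤ ρ ^ 3 * v ν) (ht₁ : v (x₁ / (l * x₁ + ν)) ≤ ρ)
    (ht₂ : v (x₂ / (l * x₂ + ν)) ≤ ρ) :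
    1 ≤ ρ ^ 3 * v (l * x₃ + ν) ∧
      v (x₁ / (l * x₁ + ν) + x₂ / (l * x₂ + ν) + x₃ / (l * x₃ + ν)) ≤ ρ ^ 3 := by
  have hν₀ : 0 < v ν := by
    by_contra! h
    nlinarith [v.nonneg ν, pow_nonneg hρ₀ 3]
  have hlν : v l < v ν := hl.trans_lt (by nlinarith [pow_lt_one₀ hρ₀ hρ₁ two_ne_zero])
  have hprod := lineProd_eq he₁ he₂ he₃
  have hsum := lineSum_eq he₁ he₂ he₃
  generalize l * x₁ + ν = y₁ at *
  generalize l * x₂ + ν = y₂ at *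
  generalize hy₃ : l * x₃ + ν = y₃ at *
  have hy₀ : y₁ * y₂ * y₃ ≠ 0 := by
    rw [← v.ne_zero_iff, hprod, abv_lineProd hv hW hlν]
    positivity
  obtain ⟨⟨hy₁₀, hy₂₀⟩, hy₃₀⟩ := mul_ne_zero_iff.mp hy₀ |>.imp_left mul_ne_zero_iff.mp
  have htsum : v (x₁ / y₁ + x₂ / y₂ + x₃ / y₃) ≤ ρ ^ 3 := by
    have : x₁ / y₁ + x₂ / y₂ + x₃ / y₃ = W.lineSum l ν / W.lineProd l ν := by
      rw [← hprod, ← hsum]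
      field_simp
    rw [this, map_div₀, abv_lineProd hv hW hlν, div_le_iff₀ (by positivity)]
    calc _ ≤ v ν ^ 2 := abv_lineSum_le hv hW hlν.le
      _ ≤ ρ ^ 3 * v ν * v ν ^ 2 := le_mul_of_one_le_left (by positivity) hν
      _ = ρ ^ 3 * v ν ^ 3 := by ring
  refine ⟨?_, htsum⟩
  subst hy₃
  refine one_le_mul_abv_line hv hρ₀ hl hν hy₃₀ ?_
  rw [show x₃ / (l * x₃ + ν) =
    (x₁ / y₁ + x₂ / y₂ + x₃ / (l * x₃ + ν)) - (x₁ / y₁ + x₂ / y₂) by ring]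
  exact hv.abv_sub_le_of_le (htsum.trans (pow_le_of_le_one hρ₀ hρ₁.le three_ne_zero))
    (hv.abv_add_le_of_le ht₁ ht₂)

namespace Point

/-- The local parameter `t = x / y` at the point at infinity, with junk value `0` at points with
`y = 0`. -/
def tCoord : W.Point → F
  | zero => 0
  | some x y _ => x / y

variable (v) in
/-- For `ρ < 1` this forces `v (x / y) ≤ ρ` (`abv_localCoords_le`). -/
def IsNearZero (ρ : ℝ) : W.Point → Prop
  | zero => True
  | some _ y _ => 1 ≤ ρ ^ 3 * v y

@[simp]
lemma tCoord_zero : (0 : W.Point).tCoord = 0 := rfl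

@[simp]
lemma tCoord_some {x y : F} (h : W.Nonsingular x y) : (some x y h).tCoord = x / y := rfl

@[simp]
lemma isNearZero_zero (ρ : ℝ) : (0 : W.Point).IsNearZero v ρ := trivial

@[simp]
lemma isNearZero_some {ρ : ℝ} {x y : F} (h : W.Nonsingular x y) :
    (some x y h).IsNearZero v ρ ↔ 1 ≤ ρ ^ 3 * v y := Iff.rfl

lemma IsNearZero.some_add_some [W.IsCharNeTwoNF] [DecidableEq F] (hv : IsNonarchimedean v)
    (hW : HasIntegralCoeffs v W) {ρ : ℝ} (hρ₀ : 0 ≤ ρ) (hρ₁ : ρ < 1) {x₁ x₂ y₁ y₂ : F}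
    {h₁ : W.Nonsingular x₁ y₁} {h₂ : W.Nonsingular x₂ y₂} (hxy : ¬(x₁ = x₂ ∧ y₁ = W.negY x₂ y₂))
    (hP : (some x₁ y₁ h₁).IsNearZero v ρ) (hQ : (some x₂ y₂ h₂).IsNearZero v ρ) :
    (some x₁ y₁ h₁ + some x₂ y₂ h₂).IsNearZero v ρ ∧
      v ((some x₁ y₁ h₁ + some x₂ y₂ h₂).tCoord - x₁ / y₁ - x₂ / y₂) ≤ ρ ^ 3 := by
  rw [isNearZero_some] at hP hQ
  obtain ⟨hl, hν⟩ := abv_slope_le hv hW hρ₀ hρ₁ h₁.1 h₂.1 hxy hP hQ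
  obtain ⟨he₂, he₃⟩ := addX_vieta h₁.1 h₂.1 hxy
  have hline := slope_mul_sub_add h₁.1 h₂.1 hxy
  obtain ⟨-, -, ht₁⟩ := abv_localCoords_le hv hW hρ₀ hρ₁ h₁.1 hP
  obtain ⟨-, -, ht₂⟩ := abv_localCoords_le hv hW hρ₀ hρ₁ h₂.1 hQ
  have hy₁ : W.slope x₁ x₂ y₁ y₂ * x₁ + (y₁ - W.slope x₁ x₂ y₁ y₂ * x₁) = y₁ := by ring
  have hy₂ : W.slope x₁ x₂ y₁ y₂ * x₂ + (y₁ - W.slope x₁ x₂ y₁ y₂ * x₁) = y₂ := by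
    linear_combination hline
  rw [← hy₁] at ht₁
  rw [← hy₂] at ht₂
  obtain ⟨hy₃, hsum⟩ := abv_third_root_le hv hW hρ₀ hρ₁ (by simp) he₂ he₃ hl hν ht₁ ht₂
  rw [hy₁, hy₂] at hsum
  have haddY : W.addY x₁ x₂ y₁ (W.slope x₁ x₂ y₁ y₂) =
      -(W.slope x₁ x₂ y₁ y₂ * W.addX x₁ x₂ (W.slope x₁ x₂ y₁ y₂) +
        (y₁ - W.slope x₁ x₂ y₁ y₂ * x₁)) := by
    simp only [addY, negAddY, negY, a₁_of_isCharNeTwoNF, a₃_of_isCharNeTwoNF]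
    ring
  rw [add_some hxy, isNearZero_some, tCoord_some, haddY, map_neg_eq_map]
  refine ⟨hy₃, ?_⟩
  rw [← map_neg_eq_map]
  convert hsum using 2
  rw [div_neg]
  ring

lemma IsNearZero.add [W.IsCharNeTwoNF] [DecidableEq F] (hv : IsNonarchimedean v)
    (hW : HasIntegralCoeffs v W) {ρ : ℝ} (hρ₀ : 0 ≤ ρ) (hρ₁ : ρ < 1) {P Q : W.Point}
    (hP : P.IsNearZero v ρ) (hQ : Q.IsNearZero v ρ) :
    (P + Q).IsNearZero v ρ ∧ v ((P + Q).tCoord - P.tCoord - Q.tCoord) ≤ ρ ^ 3 := by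
  rcases P with _ | ⟨x₁, y₁, h₁⟩
  · simpa [← zero_def, pow_nonneg hρ₀] using hQ
  rcases Q with _ | ⟨x₂, y₂, h₂⟩
  · simpa [← zero_def, pow_nonneg hρ₀] using hP
  by_cases hxy : x₁ = x₂ ∧ y₁ = W.negY x₂ y₂
  · rw [add_of_Y_eq hxy.1 hxy.2]
    obtain ⟨rfl, rfl⟩ := hxy
    simp [negY, div_neg, pow_nonneg hρ₀]
  · simpa using hP.some_add_some hv hW hρ₀ hρ₁ hxy hQ

lemma IsNearZero.nsmul [W.IsCharNeTwoNF] [DecidableEq F] (hv : IsNonarchimedean v)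
    (hW : HasIntegralCoeffs v W) {ρ : ℝ} (hρ₀ : 0 ≤ ρ) (hρ₁ : ρ < 1) {P : W.Point}
    (hP : P.IsNearZero v ρ) (n : ℕ) :
    (n • P).IsNearZero v ρ ∧ v ((n • P).tCoord - n * P.tCoord) ≤ ρ ^ 3 := by
  induction n with
  | zero => simp [hρ₀]
  | succ n ih =>
    obtain ⟨hnear, hadd⟩ := ih.1.add hv hW hρ₀ hρ₁ hP
    rw [succ_nsmul]
    refine ⟨hnear, ?_⟩
    rw [show (n • P + P).tCoord - ((n + 1 : ℕ) : F) * P.tCoord =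
      ((n • P + P).tCoord - (n • P).tCoord - P.tCoord) + ((n • P).tCoord - n * P.tCoord) by
        push_cast; ring]
    exact hv.abv_add_le_of_le hadd ih.2

lemma isNearZero_some_of_one_lt [W.IsCharNeTwoNF] (hv : IsNonarchimedean v)
    (hW : HasIntegralCoeffs v W) {x y : F} (h : W.Nonsingular x y) (hy : 1 < v y) :
    v (x / y) < 1 ∧ (some x y h).IsNearZero v (v (x / y)) := by
  have hy₀ : y ≠ 0 := by rintro rfl; norm_num at hy
  have hs : v y⁻¹ < 1 := by rw [map_inv₀]; exact inv_lt_one_of_one_lt₀ hy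
  have hcube := (h.1.localEquation hy₀).abv_pow_three hv hW (inv_ne_zero hy₀) hs
  refine ⟨(pow_lt_one_iff_of_nonneg (v.nonneg _) three_ne_zero).mp (hcube ▸ hs), ?_⟩
  rw [isNearZero_some, hcube, map_inv₀, inv_mul_cancel₀ (v.ne_zero_iff.mpr hy₀)]

lemma nsmul_some_ne_zero_of_prime {p : ℕ} [Fact p.Prime] {W : Affine ℚ} [W.IsCharNeTwoNF]
    (hW : HasIntegralCoeffs (Rat.AbsoluteValue.padic p) W) {x y : ℚ} (h : W.Nonsingular x y)
    (hy : 1 < Rat.AbsoluteValue.padic p y) {q : ℕ} (hq : q.Prime) : q • some x y h ≠ 0 := by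
  set v := Rat.AbsoluteValue.padic p
  have hv : IsNonarchimedean v := Rat.AbsoluteValue.isNonarchimedean_padic
  obtain ⟨hρ₁, hP⟩ := isNearZero_some_of_one_lt hv hW h hy
  have hρ : 0 < v (x / y) := by
    refine (v.nonneg _).lt_of_ne fun h0 ↦ ?_
    rw [isNearZero_some, ← h0] at hP
    norm_num at hP
  intro hqP
  have hbound := (hP.nsmul hv hW (v.nonneg _) hρ₁ q).2
  rw [hqP, tCoord_zero, tCoord_some, zero_sub, map_neg_eq_map, map_mul,
    show v (x / y) ^ 3 = v (x / y) ^ 2 * v (x / y) by ring] at hbound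
  exact (Rat.AbsoluteValue.inv_sq_lt_padic_of_prime hq).not_ge <|
    (le_of_mul_le_mul_right hbound hρ).trans
      (by gcongr; exact Rat.AbsoluteValue.padic_le_inv_of_lt_one hρ₁)

theorem not_isOfFinAddOrder_of_one_lt_padicNorm {p : ℕ} [Fact p.Prime] {W : Affine ℚ}
    [W.IsCharNeTwoNF] (hW : HasIntegralCoeffs (Rat.AbsoluteValue.padic p) W) {x y : ℚ}
    (h : W.Nonsingular x y) (hy : 1 < padicNorm p y) : ¬IsOfFinAddOrder (some x y h) := by
  set v := Rat.AbsoluteValue.padic p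
  have hv : IsNonarchimedean v := Rat.AbsoluteValue.isNonarchimedean_padic
  intro hfin
  obtain ⟨hρ₁, hP⟩ := isNearZero_some_of_one_lt hv hW h
    (by rw [Rat.AbsoluteValue.padic_eq_padicNorm]; exact_mod_cast hy)
  obtain ⟨n, q, hq, hord⟩ := hfin.exists_addOrderOf_nsmul_prime (some_ne_zero h)
  have hQ := (hP.nsmul hv hW (v.nonneg _) hρ₁ n).1
  have hqQ : q • n • some x y h = 0 := hord ▸ addOrderOf_nsmul_eq_zero _
  rcases hn : n • some x y h with _ | ⟨x', y', h'⟩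
  · rw [hn, ← zero_def, addOrderOf_zero] at hord
    exact hq.one_lt.ne hord
  rw [hn, isNearZero_some] at hQ
  have hy' : 1 < v y' := by
    by_contra! hle
    have := mul_le_mul_of_nonneg_left hle (pow_nonneg (v.nonneg (x / y)) 3)
    linarith [pow_lt_one₀ (v.nonneg _) hρ₁ three_ne_zero]
  exact nsmul_some_ne_zero_of_prime hW h' hy' hq (hn ▸ hqQ)

end Point

end WeierstrassCurve.Affine

open WeierstrassCurve.Affine

instance : Fact (Nat.Prime 5) := ⟨by norm_num⟩

instance : E0.IsCharNeTwoNF := ⟨rfl, rfl⟩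

lemma E0_hasIntegralCoeffs : HasIntegralCoeffs (Rat.AbsoluteValue.padic 5) E0 where
  a₂ := by
    show Rat.AbsoluteValue.padic 5 10334 ≤ 1
    exact_mod_cast Rat.AbsoluteValue.padic_le_one 5 10334
  a₄ := by
    show Rat.AbsoluteValue.padic 5 9150625 ≤ 1
    exact_mod_cast Rat.AbsoluteValue.padic_le_one 5 9150625
  a₆ := by simp [E0]

lemma E0_negY_ne : (100000 : ℚ) ≠ E0.negY 625 100000 := by
  norm_num [negY]

lemma E0_addY_double :
    E0.addY 625 625 100000 (E0.slope 625 625 100000 100000) = -(31287216 / 125) := by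
  rw [slope_of_Y_ne rfl E0_negY_ne]
  norm_num [addY, negAddY, addX, negY, E0]

lemma one_lt_padicNorm_E0_addY_double :
    1 < padicNorm 5 (E0.addY 625 625 100000 (E0.slope 625 625 100000 100000)) := by
  have h125 : padicNorm 5 (125 : ℚ) = 1 / 125 := by
    rw [show (125 : ℚ) = (5 : ℕ) ^ 3 by norm_num, IsAbsoluteValue.abv_pow (padicNorm 5),
      padicNorm.padicNorm_p_of_prime]
    norm_num
  have hnum : padicNorm 5 (31287216 : ℚ) = 1 := by
    exact_mod_cast (padicNorm.nat_eq_one_iff 31287216).mpr (by norm_num)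
  rw [E0_addY_double, padicNorm.neg, padicNorm.div, h125, hnum]
  norm_num

theorem stmt_15 :
    E0.Equation 625 100000 ∧
      ∀ h : E0.Nonsingular 625 100000,
        ¬ IsOfFinAddOrder (WeierstrassCurve.Affine.Point.some _ _ h) := by
  refine ⟨by rw [equation_iff_of_isCharNeTwoNF]; norm_num [E0], fun h hfin ↦ ?_⟩
  exact Point.not_isOfFinAddOrder_of_one_lt_padicNorm E0_hasIntegralCoeffs _
    one_lt_padicNorm_E0_addY_double (Point.add_some (fun hxy ↦ E0_negY_ne hxy.2) ▸ hfin.add hfin)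
end

section
/- For every rational a with a(a+1)(a-1)(a^2-6a+1) ≠ 0, the x-coordinates 4, 4a, 4a^2, 4a^3 of points on E_a form a geometric progression with common ratio a, and each of 4a, 4a^2, 4a^3 is the x-coordinate of a rational point on E_a : y^2 = x^3 + (a^4-4a^3-2a^2-4a+1)x^2 + 16a^4x. -/
theorem stmt_18 (a : ℚ) (ha : a * (a + 1) * (a - 1) * (a ^ 2 - 6 * a + 1) ≠ 0) :
    (4 * a = a * 4 ∧ 4 * a ^ 2 = a * (4 * a) ∧ 4 * a ^ 3 = a * (4 * a ^ 2)) ∧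
      (∀ x ∈ ({4 * a, 4 * a ^ 2, 4 * a ^ 3} : Set ℚ),
        ∃ y : ℚ, y ^ 2 = x ^ 3 + (a ^ 4 - 4 * a ^ 3 - 2 * a ^ 2 - 4 * a + 1) * x ^ 2 +
          16 * a ^ 4 * x) := by
  refine ⟨⟨by ring, by ring, by ring⟩, ?_⟩
  rintro x (rfl | rfl | rfl)
  · exact ⟨4 * a * (a ^ 2 - 1), by ring⟩
  · exact ⟨4 * a ^ 2 * (a - 1) ^ 2, by ring⟩
  · exact ⟨4 * a ^ 3 * (a ^ 2 - 1), by ring⟩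
end

section
/- For every rational k, setting a = (k^2-2k+2)/(k^2+2) (note k^2 + 2 ≠ 0 automatically over Q), the expression 4^3 + (a^4-4a^3-2a^2-4a+1)·16 + 64a^4 is a rational square if and only if 4k^4-8k^3+21k^2-16k+16 is a rational square. -/
theorem stmt_19 (k : ℚ) :
    (∃ y : ℚ,
        y ^ 2 = 4 ^ 3 +
            (((k ^ 2 - 2 * k + 2) / (k ^ 2 + 2)) ^ 4 -
                4 * ((k ^ 2 - 2 * k + 2) / (k ^ 2 + 2)) ^ 3 -
                2 * ((k ^ 2 - 2 * k + 2) / (k ^ 2 + 2)) ^ 2 -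
                4 * ((k ^ 2 - 2 * k + 2) / (k ^ 2 + 2)) + 1) * 16 +
            64 * ((k ^ 2 - 2 * k + 2) / (k ^ 2 + 2)) ^ 4) ↔
      ∃ Y : ℚ, Y ^ 2 = 4 * k ^ 4 - 8 * k ^ 3 + 21 * k ^ 2 - 16 * k + 16 := by
  have h2 : (k ^ 2 + 2 : ℚ) ≠ 0 := by positivity
  rcases eq_or_ne k 0 with rfl | hk
  · constructor
    · intro _; exact ⟨4, by norm_num⟩
    · intro _; exact ⟨0, by norm_num⟩
  · set c : ℚ := 16 * k / (k ^ 2 + 2) ^ 2 with hc_def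
    have hc : c ≠ 0 := by
      simp only [hc_def, div_ne_zero_iff]
      constructor
      · exact mul_ne_zero (by norm_num) hk
      · positivity
    have key : (4 ^ 3 +
            (((k ^ 2 - 2 * k + 2) / (k ^ 2 + 2)) ^ 4 -
                4 * ((k ^ 2 - 2 * k + 2) / (k ^ 2 + 2)) ^ 3 -
                2 * ((k ^ 2 - 2 * k + 2) / (k ^ 2 + 2)) ^ 2 -
                4 * ((k ^ 2 - 2 * k + 2) / (k ^ 2 + 2)) + 1) * 16 +
            64 * ((k ^ 2 - 2 * k + 2) / (k ^ 2 + 2)) ^ 4 : ℚ)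
        = c ^ 2 * (4 * k ^ 4 - 8 * k ^ 3 + 21 * k ^ 2 - 16 * k + 16) := by
      rw [hc_def]
      field_simp
      ring
    constructor
    · rintro ⟨y, hy⟩
      refine ⟨y / c, ?_⟩
      rw [div_pow]
      rw [hy, key, mul_comm, mul_div_assoc, div_self (pow_ne_zero 2 hc), mul_one]
    · rintro ⟨Y, hY⟩
      exact ⟨c * Y, by rw [mul_pow, hY, key]⟩
end
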